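/- arXiv:math/0207150 — 6 statements merged into one kernel-verified Lean document; each statement's English description precedes it below -/
import Mathlib

section
/- Let k be a field of characteristic p > 0 and let P \in k[t] be a nonzero polynomial of degree m. Then there exists a polynomial Q \in k[t] that is a multiple of P in k[t] and has the form Q(t) = \sum_{i=0}^m r_i t^{p^i} with r_i \in k and r_m \neq 0. -/
/-!
Let `x` be the class of `t` in the `m`-dimensional `k`-algebra `A = k[t]/(P)`, and let
`W j` be the span of `x, x^p, …, x^(p^(j-1))`. By dimension count some `j ≤ m` has
`x^(p^j) ∈ W j`. Since `y ↦ y^p` is additive and `p`-semilinear on `A`, it maps `W j` into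
`W (j+1)`, so the relation `x^(p^j) ∈ W j` propagates up to `x^(p^m) ∈ W m`. Such a relation
is exactly an additive polynomial with leading coefficient `1` at `t^(p^m)` vanishing at `x`.
-/

open Polynomial Module Submodule Set

theorem exists_le_finrank_mem_span_range_fin {K V : Type*} [DivisionRing K] [AddCommGroup V]
    [Module K V] [FiniteDimensional K V] (v : ℕ → V) :
    ∃ j ≤ finrank K V, v j ∈ span K (range fun i : Fin j => v i) := by
  by_contra! h
  have hind : ∀ n ≤ finrank K V + 1, LinearIndependent K fun i : Fin n => v i := by
    intro n hn
    induction n with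
    | zero => exact linearIndependent_empty_type
    | succ n ih => exact linearIndependent_finSucc'.mpr ⟨ih (by omega), h n (by omega)⟩
  simpa using (hind _ le_rfl).fintype_card_le_finrank

section Frobenius

variable {K A : Type*} [Field K] [CommRing A] [Algebra K A] (p : ℕ) [Fact p.Prime] [CharP K p]

theorem pow_char_mem_span_range_pow_pow_succ (x : A) {j : ℕ} {y : A}
    (hy : y ∈ span K (range fun i : Fin j => x ^ p ^ (i : ℕ))) :
    y ^ p ∈ span K (range fun i : Fin (j + 1) => x ^ p ^ (i : ℕ)) := by
  have hp : p.Prime := Fact.out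
  have hpA : (p : A) = 0 := by rw [← map_natCast (algebraMap K A), CharP.cast_eq_zero, map_zero]
  induction hy using span_induction with
  | mem _ h =>
    obtain ⟨i, rfl⟩ := h
    exact subset_span ⟨i.succ, by simp [← pow_mul, ← pow_succ]⟩
  | zero => simp [hp.pos.ne']
  | add y z _ _ hy hz =>
    rw [add_pow_prime_eq hp, hpA, zero_mul, zero_mul, zero_mul, add_zero]
    exact add_mem hy hz
  | smul c y _ hy =>
    rw [_root_.smul_pow]
    exact smul_mem _ _ hy

theorem pow_pow_mem_span_range_pow_pow_of_le (x : A) {j n : ℕ}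
    (hj : x ^ p ^ j ∈ span K (range fun i : Fin j => x ^ p ^ (i : ℕ))) (hjn : j ≤ n) :
    x ^ p ^ n ∈ span K (range fun i : Fin n => x ^ p ^ (i : ℕ)) := by
  induction n, hjn using Nat.le_induction with
  | base => exact hj
  | succ n _ ih =>
    rw [pow_succ, pow_mul]
    exact pow_char_mem_span_range_pow_pow_succ p x ih

theorem pow_pow_finrank_mem_span_range_pow_pow [FiniteDimensional K A] (x : A) :
    x ^ p ^ finrank K A ∈ span K (range fun i : Fin (finrank K A) => x ^ p ^ (i : ℕ)) := by
  obtain ⟨j, hj, hmem⟩ := exists_le_finrank_mem_span_range_fin (K := K) fun i => x ^ p ^ i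
  exact pow_pow_mem_span_range_pow_pow_of_le p x hmem hj

end Frobenius

/-- Over a field of characteristic `p > 0`, every nonzero polynomial `P` of degree `m`
divides an additive polynomial `Q(t) = ∑_{i=0}^m r_i t^(p^i)` with `r_m ≠ 0`. -/
theorem exists_additive_multiple
    (k : Type*) [Field k] (p : ℕ) [Fact p.Prime] [CharP k p]
    (P : k[X]) (hP : P ≠ 0) (m : ℕ) (hm : P.natDegree = m) :
    ∃ r : Fin (m + 1) → k, r (Fin.last m) ≠ 0 ∧
      P ∣ ∑ i : Fin (m + 1), C (r i) * X ^ (p ^ (i : ℕ)) := by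
  let pb := AdjoinRoot.powerBasis hP
  have : FiniteDimensional k (AdjoinRoot P) := pb.finite
  have hdim : finrank k (AdjoinRoot P) = m := by rw [pb.finrank, AdjoinRoot.powerBasis_dim, hm]
  have hmem := pow_pow_finrank_mem_span_range_pow_pow (K := k) p (AdjoinRoot.root P)
  rw [hdim] at hmem
  obtain ⟨c, hc⟩ := (mem_span_range_iff_exists_fun k).mp hmem
  refine ⟨Fin.snoc (-c) 1, by simp, ?_⟩
  rw [← AdjoinRoot.mk_eq_zero, map_sum, Fin.sum_univ_castSucc]
  simp [Algebra.smul_def, ← hc]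
end

section
/- Let F be a field of characteristic p > 0 and let t_1, \dots, t_m be elements of F. Then the polynomial S(x) = \prod_{(h_1,\dots,h_m) \in \mathbb{F}_p^m} (x + h_1 t_1 + \cdots + h_m t_m) \in F[x] is additive, i.e., S(x) = \sum_{i=0}^m c_i x^{p^i} for some c_i \in F. -/
open Polynomial

section MooreHelpers

variable {F : Type*} [Field F] {p : ℕ} [Fact p.Prime] [CharP F p]

lemma zmod_prod_X_sub_C : ∏ a : ZMod p, (X - C a) = X ^ p - X := by
  have hp : 1 < p := (Fact.out : p.Prime).one_lt
  have hq : Fintype.card (ZMod p) = p := ZMod.card p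
  have hroots := FiniteField.roots_X_pow_card_sub_X (ZMod p)
  rw [hq] at hroots
  have hmonic : (X ^ p - X : (ZMod p)[X]).Monic := by
    refine monic_X_pow_sub ?_
    rw [degree_X]
    exact_mod_cast hp
  have hdeg : (X ^ p - X : (ZMod p)[X]).natDegree = p :=
    FiniteField.X_pow_card_sub_X_natDegree_eq (ZMod p) hp
  have hcard : (X ^ p - X : (ZMod p)[X]).roots.card = (X ^ p - X : (ZMod p)[X]).natDegree := by
    rw [hroots, hdeg]
    simp [hq]
  have := prod_multiset_X_sub_C_of_monic_of_roots_card_eq hmonic hcard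
  rw [hroots] at this
  rw [← this, Finset.prod_eq_multiset_prod]


variable (F p) in
/-- The canonical embedding of the prime field. -/
noncomputable def phi : ZMod p →+* F := ZMod.castHom (dvd_refl p) F

lemma phi_pow_card (c : ZMod p) : (phi F p c) ^ p = phi F p c := by
  rw [← map_pow, ZMod.pow_card]

lemma phi_pow_pow (c : ZMod p) (i : ℕ) : (phi F p c) ^ p ^ i = phi F p c := by
  induction i with
  | zero => simp
  | succ i ih => rw [pow_succ, pow_mul, ih, phi_pow_card]

lemma phi_eq_val_cast (c : ZMod p) : phi F p c = ((c.val : ℕ) : F) := by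
  rw [ZMod.natCast_val, phi, ZMod.castHom_apply]

lemma prod_X_add_prime : ∏ a : ZMod p, (X + C (phi F p a)) = X ^ p - X := by
  have h1 : ∏ a : ZMod p, ((X : F[X]) - C (phi F p a)) = X ^ p - X := by
    have := congrArg (Polynomial.map (phi F p)) (zmod_prod_X_sub_C (p := p))
    rw [Polynomial.map_prod] at this
    simpa using this
  rw [← h1]
  exact Fintype.prod_equiv (Equiv.neg (ZMod p)) _ _ (fun a => by simp)

lemma prod_X_add_prime_mul (b : F) :
    ∏ c : ZMod p, (X + C (phi F p c * b)) = X ^ p - C (b ^ (p - 1)) * X := by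
  have hp : 1 < p := (Fact.out : p.Prime).one_lt
  by_cases hb : b = 0
  · subst hb
    simp only [mul_zero, map_zero, add_zero, zero_pow (by omega : p - 1 ≠ 0), map_zero, zero_mul,
      sub_zero, Finset.prod_const, ZMod.card, Finset.card_univ]
  · have hfac : ∀ c : ZMod p, (X : F[X]) + C (phi F p c * b)
        = C b * (C b⁻¹ * X + C (phi F p c)) := by
      intro c
      rw [mul_add, ← mul_assoc, ← C_mul, mul_inv_cancel₀ hb, C_1, one_mul, ← C_mul, mul_comm b]
    have h2 : (aeval ((C b⁻¹ : F[X]) * X)) (∏ a : ZMod p, (X + C (phi F p a)))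
        = ∏ a : ZMod p, (C b⁻¹ * X + C (phi F p a)) := by
      rw [map_prod]
      exact Finset.prod_congr rfl fun a _ => by
        simp [algebraMap_eq]
    have hbp : b ^ p * b⁻¹ = b ^ (p - 1) := by
      have h3 : b ^ (p - 1) * b = b ^ p := by
        rw [← pow_succ]; congr 1; omega
      rw [← h3, mul_assoc, mul_inv_cancel₀ hb, mul_one]
    calc ∏ c : ZMod p, ((X : F[X]) + C (phi F p c * b))
        = ∏ c : ZMod p, (C b * (C b⁻¹ * X + C (phi F p c))) :=
          Finset.prod_congr rfl fun c _ => hfac c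
      _ = (∏ _c : ZMod p, (C b : F[X])) * ∏ c : ZMod p, (C b⁻¹ * X + C (phi F p c)) :=
          Finset.prod_mul_distrib
      _ = C b ^ p * (aeval ((C b⁻¹ : F[X]) * X)) (∏ a : ZMod p, (X + C (phi F p a))) := by
          rw [h2, Finset.prod_const, Finset.card_univ, ZMod.card]
      _ = C b ^ p * ((C b⁻¹ * X) ^ p - C b⁻¹ * X) := by
          rw [prod_X_add_prime]
          simp [algebraMap_eq]
      _ = X ^ p - C (b ^ (p - 1)) * X := by
          rw [mul_pow, ← C_pow, ← C_pow, mul_sub, ← mul_assoc, ← mul_assoc, ← C_mul, ← C_mul,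
            ← mul_pow, mul_inv_cancel₀ hb, one_pow, C_1, one_mul, hbp]

lemma moore_key : ∀ (m : ℕ) (t : Fin m → F),
    ∃ a : Fin (m + 1) → F,
      ∏ h : Fin m → ZMod p, (X + C (∑ j : Fin m, phi F p (h j) * t j))
        = ∑ i : Fin (m + 1), C (a i) * X ^ p ^ (i : ℕ) := by
  intro m
  induction m with
  | zero =>
    intro t
    refine ⟨fun _ => 1, ?_⟩
    simp
  | succ m ih =>
    intro t
    obtain ⟨a, ha⟩ := ih (fun j => t j.succ)
    set P : F[X] := ∑ i : Fin (m + 1), C (a i) * X ^ p ^ (i : ℕ) with hP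
    set β : F := ∑ i : Fin (m + 1), a i * (t 0) ^ p ^ (i : ℕ) with hβ
    -- Step 1: reindex the product
    have hre : ∏ h : Fin (m + 1) → ZMod p, ((X : F[X]) + C (∑ j, phi F p (h j) * t j))
        = ∏ c : ZMod p, ∏ h : Fin m → ZMod p,
            ((X + C (phi F p c * t 0)) + C (∑ j : Fin m, phi F p (h j) * t j.succ)) := by
      rw [← Fintype.prod_prod_type
        (f := fun ch : ZMod p × (Fin m → ZMod p) =>
          ((X : F[X]) + C (phi F p ch.1 * t 0))
            + C (∑ j : Fin m, phi F p (ch.2 j) * t j.succ))]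
      refine (Fintype.prod_equiv (Fin.consEquiv (fun _ : Fin (m+1) => ZMod p)) _ _ ?_).symm
      rintro ⟨c, h⟩
      simp only [Fin.consEquiv_apply]
      rw [Fin.sum_univ_succ]
      simp [add_assoc]
    -- Step 2: inner product equals P + C (phi c * β)
    have hinner : ∀ c : ZMod p,
        ∏ h : Fin m → ZMod p,
            ((X + C (phi F p c * t 0)) + C (∑ j : Fin m, phi F p (h j) * t j.succ))
          = P + C (phi F p c * β) := by
      intro c
      have := congrArg (aeval ((X : F[X]) + C (phi F p c * t 0))) ha
      rw [map_prod, map_sum] at this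
      simp only [map_add, map_mul, map_pow, aeval_X, aeval_C, Polynomial.algebraMap_eq] at this
      rw [C_mul, this, ← C_mul]
      have hexp : ∀ i : Fin (m + 1),
          ((X : F[X]) + C (phi F p c * t 0)) ^ p ^ (i : ℕ)
            = X ^ p ^ (i : ℕ) + C (phi F p c * (t 0) ^ p ^ (i : ℕ)) := by
        intro i
        rw [add_pow_char_pow, ← C_pow, mul_pow, phi_pow_pow]
      calc ∑ i : Fin (m + 1), C (a i) * ((X : F[X]) + C (phi F p c * t 0)) ^ p ^ (i : ℕ)
          = ∑ i : Fin (m + 1),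
              (C (a i) * X ^ p ^ (i : ℕ) + C (phi F p c * (a i * (t 0) ^ p ^ (i : ℕ)))) := by
            refine Finset.sum_congr rfl fun i _ => ?_
            rw [hexp i, mul_add, ← C_mul]
            ring_nf
        _ = P + C (phi F p c * β) := by
            rw [Finset.sum_add_distrib, ← hP]
            congr 1
            rw [hβ, Finset.mul_sum, map_sum]
    -- Step 3: outer product
    have houter : ∏ c : ZMod p, (P + C (phi F p c * β)) = P ^ p - C (β ^ (p - 1)) * P := by
      have := congrArg (aeval P) (prod_X_add_prime_mul (p := p) β)
      rw [map_prod] at this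
      simp only [map_add, map_sub, map_mul, map_pow, aeval_X, aeval_C,
        Polynomial.algebraMap_eq] at this
      rw [← C_pow] at this
      calc ∏ c : ZMod p, (P + C (phi F p c * β))
          = ∏ c : ZMod p, (P + C (phi F p c) * C β) := by
            refine Finset.prod_congr rfl fun c _ => by rw [C_mul]
        _ = P ^ p - C (β ^ (p - 1)) * P := this
    -- Step 4: Frobenius on P
    have hfrob : P ^ p = ∑ i : Fin (m + 1), C (a i ^ p) * X ^ p ^ ((i : ℕ) + 1) := by
      rw [hP, sum_pow_char]
      refine Finset.sum_congr rfl fun i _ => ?_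
      rw [mul_pow, ← C_pow, ← pow_mul, ← pow_succ]
    -- Step 5: assemble
    refine ⟨fun i => (Fin.cons (0 : F) (fun j : Fin (m + 1) => a j ^ p) : Fin (m + 2) → F) i
        - (Fin.snoc (fun _j : Fin (m + 1) => β ^ (p - 1) * a _j) (0 : F) : Fin (m + 2) → F) i, ?_⟩
    rw [hre, Finset.prod_congr rfl fun c _ => hinner c, houter, hfrob]
    simp only [C_sub, sub_mul, Finset.sum_sub_distrib]
    congr 1
    · conv_rhs => rw [Fin.sum_univ_succ]
      simp only [Fin.cons_zero, Fin.cons_succ, Fin.val_succ, map_zero, zero_mul, zero_add]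
    · rw [hP, Finset.mul_sum]
      conv_rhs => rw [Fin.sum_univ_castSucc]
      simp only [Fin.snoc_castSucc, Fin.snoc_last, map_zero, zero_mul, add_zero,
        Fin.coe_castSucc, C_mul, mul_assoc]

end MooreHelpers

/-- Over a field `F` of characteristic `p > 0`, the polynomial
`S(x) = ∏_{(h_1,…,h_m) ∈ 𝔽_p^m} (x + h_1 t_1 + ⋯ + h_m t_m)` is additive:
every monomial occurring in it has degree a power of `p`. -/
theorem moore_product_additive
    (F : Type*) [Field F] (p : ℕ) [Fact p.Prime] [CharP F p]
    (m : ℕ) (t : Fin m → F)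
    (S : F[X])
    (hS : S = ∏ h : Fin m → ZMod p, (X + C (∑ j : Fin m, ((h j).val : F) * t j))) :
    ∀ n : ℕ, S.coeff n ≠ 0 → ∃ i : ℕ, n = p ^ i := by
  obtain ⟨a, ha⟩ := moore_key (F := F) (p := p) m t
  have hS' : S = ∑ i : Fin (m + 1), C (a i) * X ^ p ^ (i : ℕ) := by
    rw [hS, ← ha]
    exact Finset.prod_congr rfl fun h _ => by simp [phi_eq_val_cast]
  intro n hn
  by_contra hcon
  push_neg at hcon
  apply hn
  rw [hS', finset_sum_coeff]
  refine Finset.sum_eq_zero fun i _ => ?_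
  rw [coeff_C_mul, coeff_X_pow, if_neg (hcon (i : ℕ)), mul_zero]
end

section
/- Let k be an infinite field of characteristic p > 0 and let r_1, \dots, r_m be distinct elements of k. Then there exists c \in k such that c + r_j \neq 0 for all j and, for every tuple (h_1, \dots, h_m) \in \mathbb{F}_p^m not all zero, h_1/(c + r_1) + \cdots + h_m/(c + r_m) \neq 0. Equivalently, the elements 1/(c+r_1), \dots, 1/(c+r_m) are linearly independent over \mathbb{F}_p. -/
open Polynomial in
/-- Over an infinite field of characteristic `p > 0`, given distinct `r_1, …, r_m`,
there exists `c` with all `c + r_j ≠ 0` such that `1/(c+r_1), …, 1/(c+r_m)` are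
linearly independent over `𝔽_p`. -/
theorem exists_shift_reciprocals_linearIndependent
    (k : Type*) [Field k] [Infinite k] (p : ℕ) [Fact p.Prime] [CharP k p]
    (m : ℕ) (r : Fin m → k) (hr : Function.Injective r) :
    ∃ c : k, (∀ j, c + r j ≠ 0) ∧
      ∀ h : Fin m → ZMod p, h ≠ 0 →
        (∑ j : Fin m, ((h j).val : k) / (c + r j)) ≠ 0 := by
  classical
  set P : (Fin m → ZMod p) → Polynomial k := fun h =>
    ∑ j : Fin m, Polynomial.C ((h j).val : k) *
      ∏ i ∈ Finset.univ.erase j, (Polynomial.X + Polynomial.C (r i)) with hP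
  have castne : ∀ a : ZMod p, a ≠ 0 → ((a.val : k) ≠ 0) := by
    intro a ha h2
    have hv : a.val ≠ 0 := fun e => ha (by rwa [ZMod.val_eq_zero] at e)
    have hd := (CharP.cast_eq_zero_iff k p a.val).mp h2
    exact absurd (Nat.le_of_dvd (Nat.pos_of_ne_zero hv) hd) (not_le.mpr (ZMod.val_lt a))
  have hPeval : ∀ (h : Fin m → ZMod p) (c : k),
      Polynomial.eval c (P h) = ∑ j : Fin m, ((h j).val : k) *
        ∏ i ∈ Finset.univ.erase j, (c + r i) := by
    intro h c
    simp [hP, Polynomial.eval_finset_sum, Polynomial.eval_prod]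
  have hPne : ∀ h : Fin m → ZMod p, h ≠ 0 → P h ≠ 0 := by
    intro h hh hP0
    obtain ⟨j0, hj0⟩ : ∃ j, h j ≠ 0 := by
      by_contra hcon; push_neg at hcon; exact hh (funext hcon)
    have := hPeval h (-(r j0))
    rw [hP0] at this
    simp only [Polynomial.eval_zero] at this
    rw [Finset.sum_eq_single j0] at this
    · have hprod : (∏ i ∈ Finset.univ.erase j0, (-(r j0) + r i)) ≠ 0 := by
        apply Finset.prod_ne_zero_iff.mpr
        intro i hi
        have : r i ≠ r j0 := fun e => (Finset.mem_erase.mp hi).1 (hr e)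
        intro e
        exact this (neg_add_eq_zero.mp e).symm
      exact (mul_ne_zero (castne _ hj0) hprod) this.symm
    · intro j _ hj
      have : j0 ∈ Finset.univ.erase j := Finset.mem_erase.mpr ⟨Ne.symm hj, Finset.mem_univ _⟩
      rw [Finset.prod_eq_zero this (by ring)]
      ring
    · intro hc; exact absurd (Finset.mem_univ j0) hc
  -- bad set
  let S : Finset k :=
    (Finset.univ.image fun j => -(r j)) ∪
      (Finset.univ.filter (fun h : Fin m → ZMod p => h ≠ 0)).biUnion
        (fun h => (P h).roots.toFinset)
  obtain ⟨c, hc⟩ := Infinite.exists_notMem_finset S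
  have hcr : ∀ j, c + r j ≠ 0 := by
    intro j he
    apply hc
    apply Finset.mem_union_left
    exact Finset.mem_image.mpr ⟨j, Finset.mem_univ _, (eq_neg_of_add_eq_zero_left he).symm⟩
  refine ⟨c, hcr, ?_⟩
  intro h hh hsum
  have hroot : Polynomial.eval c (P h) = 0 := by
    rw [hPeval]
    have key : ∀ j : Fin m, ((h j).val : k) * ∏ i ∈ Finset.univ.erase j, (c + r i)
        = (((h j).val : k) / (c + r j)) * ∏ i : Fin m, (c + r i) := by
      intro j
      rw [div_mul_eq_mul_div, ← Finset.prod_erase_mul Finset.univ _ (Finset.mem_univ j),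
        mul_div_assoc, mul_div_assoc, div_self (hcr j), mul_one]
    simp_rw [key]
    rw [← Finset.sum_mul, hsum, zero_mul]
  apply hc
  apply Finset.mem_union_right
  apply Finset.mem_biUnion.mpr
  refine ⟨h, Finset.mem_filter.mpr ⟨Finset.mem_univ _, hh⟩, ?_⟩
  rw [Multiset.mem_toFinset, Polynomial.mem_roots (hPne h hh)]
  exact hroot
end

section
/- With g_0, \dots, g_n the Abhyankar polynomials over an algebraically closed field K of characteristic p (g_i the sum over (i+1)-subsets I of \{0,\dots,n\} of the monomials m_I = z_{j_0}^{1+p+\cdots+p^{n-i}} z_{j_1}^{p^{n-i+1}} \cdots z_{j_i}^{p^n}): if (a_0, \dots, a_n) \in K^{n+1} satisfies g_i(a) = 0 for all i = 0, \dots, n, then a_0 = a_1 = \cdots = a_n = 0. -/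
open MvPolynomial in
open Classical in
/-- The `i`-th Abhyankar polynomial `g_i = ∑_I m_I`, where `I` runs over
`(i+1)`-element subsets of `{0,…,n}` (encoded as strictly increasing tuples
`j : Fin (i+1) → Fin (n+1)`) and
`m_I = z_{j_0}^{1+p+⋯+p^{n-i}} z_{j_1}^{p^{n-i+1}} ⋯ z_{j_i}^{p^n}`. -/
noncomputable def abhyankarG (R : Type*) [CommRing R] (p n i : ℕ) :
    MvPolynomial (Fin (n + 1)) R :=
  ∑ j ∈ Finset.univ.filter (fun j : Fin (i + 1) → Fin (n + 1) => StrictMono j),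
    ∏ k : Fin (i + 1),
      X (j k) ^ (if (k : ℕ) = 0 then ∑ s ∈ Finset.range (n - i + 1), p ^ s
                 else p ^ (n - i + (k : ℕ)))

/-- Over an algebraically closed field of characteristic `p`, the Abhyankar
polynomials `g_0, …, g_n` have no common zero other than the origin. -/
theorem abhyankarG_no_common_zero
    (K : Type*) [Field K] [IsAlgClosed K] (p : ℕ) [Fact p.Prime] [CharP K p]
    (n : ℕ) (a : Fin (n + 1) → K)
    (hz : ∀ i ≤ n, MvPolynomial.eval a (abhyankarG K p n i) = 0) :
    ∀ j, a j = 0 := by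
  classical
  have hp : p.Prime := Fact.out
  by_contra hcon
  push_neg at hcon
  obtain ⟨j₀, hj₀⟩ := hcon
  set S : Finset (Fin (n + 1)) := Finset.univ.filter (fun j => a j ≠ 0) with hSdef
  have hmemS : ∀ x, x ∈ S ↔ a x ≠ 0 := by intro x; simp [hSdef]
  have hj₀S : j₀ ∈ S := (hmemS j₀).mpr hj₀
  obtain ⟨r, hr⟩ : ∃ r, S.card = r + 1 :=
    ⟨S.card - 1, by have := Finset.card_pos.mpr ⟨j₀, hj₀S⟩; omega⟩
  have hrn : r ≤ n := by
    have h1 : S.card ≤ n + 1 := by simpa using Finset.card_le_univ S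
    omega
  -- exponents are nonzero
  have hexp : ∀ k : Fin (r + 1),
      (if (k : ℕ) = 0 then ∑ s ∈ Finset.range (n - r + 1), p ^ s
       else p ^ (n - r + (k : ℕ))) ≠ 0 := by
    intro k
    split
    · refine (Finset.sum_pos (fun i _ => pow_pos hp.pos i) ⟨0, ?_⟩).ne'
      exact Finset.mem_range.mpr (by omega)
    · exact (pow_pos hp.pos _).ne'
  set f := S.orderEmbOfFin hr with hfdef
  have hfmem : (⇑f : Fin (r + 1) → Fin (n + 1)) ∈
      Finset.univ.filter (fun j : Fin (r + 1) → Fin (n + 1) => StrictMono j) :=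
    Finset.mem_filter.mpr ⟨Finset.mem_univ _, f.strictMono⟩
  have hzr := hz r hrn
  rw [abhyankarG, map_sum] at hzr
  simp only [map_prod, map_pow, MvPolynomial.eval_X] at hzr
  rw [Finset.sum_eq_single_of_mem (⇑f) hfmem ?other] at hzr
  case other =>
    intro b hb hbne
    by_contra hprod
    have hball : ∀ k, a (b k) ≠ 0 := by
      intro k
      have hk := Finset.prod_ne_zero_iff.mp hprod k (Finset.mem_univ k)
      intro h0
      exact hk (by rw [h0, zero_pow (hexp k)])
    have hbS : ∀ k, b k ∈ S := fun k => (hmemS _).mpr (hball k)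
    have hbmono : StrictMono b := (Finset.mem_filter.mp hb).2
    exact hbne (Finset.orderEmbOfFin_unique hr hbS hbmono)
  refine Finset.prod_ne_zero_iff.mpr (fun k _ => ?_) hzr
  exact pow_ne_zero _ ((hmemS _).mp (S.orderEmbOfFin_mem hr k))
end

section
/- Let K be a field of characteristic p and let g_0, \dots, g_n be the Abhyankar polynomials in z_0, \dots, z_n. At any point a = (a_0, \dots, a_n) with all coordinates nonzero, the differentials dg_0, \dots, dg_n are linearly independent; equivalently, the Jacobian matrix (\partial g_i/\partial z_j)(a) is invertible. -/
open MvPolynomial in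
/-- A product of monomials with coefficient `1` is a monomial. -/
lemma AbhyankarAux.prod_monomial_one {σ R ι : Type*} [CommSemiring R] (s : Finset ι)
    (d : ι → (σ →₀ ℕ)) :
    (∏ k ∈ s, (monomial (d k) (1 : R))) = monomial (∑ k ∈ s, d k) 1 := by
  induction s using Finset.cons_induction with
  | empty => simp [monomial_zero']
  | cons a s ha ih => simp [ih, monomial_mul]

/-- A strictly monotone function `Fin m → ℕ` grows at least linearly. -/
lemma AbhyankarAux.strictMono_gap {m : ℕ} {f : Fin m → ℕ} (hf : StrictMono f) :
    ∀ (d : ℕ) (k l : Fin m), (l : ℕ) = (k : ℕ) + d → f k + d ≤ f l := by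
  intro d
  induction d with
  | zero => intro k l hl; have : l = k := Fin.ext (by omega); simp [this]
  | succ d ih =>
    intro k l hl
    have hm : (l : ℕ) - 1 < m := by omega
    set l' : Fin m := ⟨(l : ℕ) - 1, hm⟩ with hl'
    have h1 := ih k l' (by simp [hl']; omega)
    have h2 : f l' < f l := hf (by rw [Fin.lt_def]; simp [hl']; omega)
    omega

/-- In characteristic `p`, the coefficient appearing in the partial derivative of an
Abhyankar monomial is `1` if differentiating in the leading variable and `0` otherwise. -/
lemma AbhyankarAux.coeff_cast_eq (K : Type*) [Field K] (p : ℕ) [Fact p.Prime] [CharP K p]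
    (n i : ℕ) (j : Fin (i + 1) → Fin (n + 1)) (hj : StrictMono j) (t : Fin (n + 1)) :
    ((((∑ k : Fin (i + 1), Finsupp.single (j k)
        (if (k : ℕ) = 0 then ∑ s ∈ Finset.range (n - i + 1), p ^ s
         else p ^ (n - i + (k : ℕ)))) t : ℕ)) : K)
      = if j 0 = t then 1 else 0 := by
  classical
  rw [Finsupp.finset_sum_apply]
  simp only [Finsupp.single_apply]
  by_cases h0 : j 0 = t
  · rw [if_pos h0]
    rw [Finset.sum_eq_single (0 : Fin (i + 1))]
    · rw [if_pos h0]
      simp only [Fin.val_zero, if_pos rfl]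
      push_cast
      rw [CharP.cast_eq_zero K p, zero_geom_sum]
      simp
    · intro k _ hk
      rw [if_neg]
      intro hkt
      exact hk (hj.injective (hkt.trans h0.symm))
    · intro h; exact absurd (Finset.mem_univ _) h
  · rw [if_neg h0]
    rw [Nat.cast_sum]
    apply Finset.sum_eq_zero
    intro k _
    by_cases hkt : j k = t
    · rw [if_pos hkt]
      have hk0 : (k : ℕ) ≠ 0 := by
        intro h
        have : k = 0 := Fin.ext h
        exact h0 (this ▸ hkt)
      rw [if_neg hk0]
      push_cast
      rw [CharP.cast_eq_zero K p]
      exact zero_pow (by omega)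
    · simp [hkt]

open MvPolynomial in
open Classical in
/-- Explicit formula for the evaluated partial derivative of an Abhyankar polynomial. -/
lemma AbhyankarAux.abhyankar_entry (K : Type*) [Field K] (p : ℕ) [Fact p.Prime] [CharP K p]
    (n : ℕ) (a : Fin (n + 1) → K) (i : ℕ) (t : Fin (n + 1)) :
    MvPolynomial.eval a (MvPolynomial.pderiv t (abhyankarG K p n i)) =
      ∑ j ∈ Finset.univ.filter (fun j : Fin (i + 1) → Fin (n + 1) => StrictMono j),
        (if j 0 = t then (1 : K) else 0) *
          ((∑ k : Fin (i + 1), Finsupp.single (j k)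
              (if (k : ℕ) = 0 then ∑ s ∈ Finset.range (n - i + 1), p ^ s
               else p ^ (n - i + (k : ℕ)))) - Finsupp.single t 1).prod
            (fun x e => a x ^ e) := by
  simp only [abhyankarG, X_pow_eq_monomial, AbhyankarAux.prod_monomial_one, map_sum,
    pderiv_monomial, eval_monomial, one_mul]
  refine Finset.sum_congr rfl fun j hj => ?_
  rw [Finset.mem_filter] at hj
  rw [AbhyankarAux.coeff_cast_eq K p n i j hj.2 t]

/-- At any point with all coordinates nonzero, the differentials of the Abhyankar
polynomials `g_0, …, g_n` are linearly independent: the Jacobian matrix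
`(∂g_i/∂z_j)(a)` has nonzero determinant. -/
theorem abhyankarG_jacobian_ne_zero
    (K : Type*) [Field K] (p : ℕ) [Fact p.Prime] [CharP K p]
    (n : ℕ) (a : Fin (n + 1) → K) (ha : ∀ j, a j ≠ 0) :
    Matrix.det (Matrix.of fun i j : Fin (n + 1) =>
      MvPolynomial.eval a (MvPolynomial.pderiv j (abhyankarG K p n (i : ℕ)))) ≠ 0 := by
  set M : Matrix (Fin (n + 1)) (Fin (n + 1)) K := Matrix.of fun i j : Fin (n + 1) =>
      MvPolynomial.eval a (MvPolynomial.pderiv j (abhyankarG K p n (i : ℕ))) with hM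
  -- zero below the antidiagonal
  have hzero : ∀ i t : Fin (n + 1), n < (i : ℕ) + (t : ℕ) → M i t = 0 := by
    intro i t hit
    show MvPolynomial.eval a (MvPolynomial.pderiv t (abhyankarG K p n (i : ℕ))) = 0
    rw [AbhyankarAux.abhyankar_entry K p n a (i : ℕ) t]
    apply Finset.sum_eq_zero
    intro j hj
    rw [Finset.mem_filter] at hj
    have hj' : StrictMono fun k => ((j k : ℕ)) := fun x y h => hj.2 h
    rw [if_neg, zero_mul]
    intro h0
    have h1 := AbhyankarAux.strictMono_gap hj' (i : ℕ) 0 (Fin.last (i : ℕ)) (by simp)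
    have h2 : (j (Fin.last (i : ℕ)) : ℕ) ≤ n := Fin.is_le _
    have h3 : (j 0 : ℕ) = (t : ℕ) := by rw [h0]
    omega
  -- nonzero on the antidiagonal
  have hdiag : ∀ i : Fin (n + 1), M i (Fin.rev i) ≠ 0 := by
    intro i
    have hin : (i : ℕ) ≤ n := Fin.is_le _
    have ht : ((Fin.rev i : Fin (n + 1)) : ℕ) = n - (i : ℕ) := by
      rw [Fin.val_rev]; omega
    show MvPolynomial.eval a (MvPolynomial.pderiv (Fin.rev i) (abhyankarG K p n (i : ℕ))) ≠ 0
    rw [AbhyankarAux.abhyankar_entry K p n a (i : ℕ) (Fin.rev i)]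
    set jstar : Fin ((i : ℕ) + 1) → Fin (n + 1) := fun k => ⟨n - (i : ℕ) + (k : ℕ), by omega⟩
      with hjstar
    have hjstarSM : StrictMono jstar := by
      intro x y hxy
      rw [Fin.lt_def]
      simp only [hjstar]
      have : (x : ℕ) < (y : ℕ) := hxy
      omega
    rw [Finset.sum_eq_single jstar]
    · rw [if_pos (by rw [hjstar]; exact Fin.ext (by simp [ht]))]
      rw [one_mul]
      rw [Finsupp.prod]
      rw [Finset.prod_ne_zero_iff]
      intro x _
      exact pow_ne_zero _ (ha x)
    · intro j hj hne
      rw [Finset.mem_filter] at hj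
      have hjSM := hj.2
      have hj' : StrictMono fun k => ((j k : ℕ)) := fun x y h => hjSM h
      rw [if_neg, zero_mul]
      intro h0
      apply hne
      funext k
      apply Fin.ext
      have hg1 := AbhyankarAux.strictMono_gap hj' (k : ℕ) 0 k (by simp)
      have hg2 := AbhyankarAux.strictMono_gap hj' ((i : ℕ) - (k : ℕ)) k (Fin.last (i : ℕ))
        (by simp; omega)
      have h2 : (j (Fin.last (i : ℕ)) : ℕ) ≤ n := Fin.is_le _
      have h3 : (j 0 : ℕ) = n - (i : ℕ) := by rw [h0, ht]
      have hk : (k : ℕ) ≤ (i : ℕ) := by omega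
      show (j k : ℕ) = n - (i : ℕ) + (k : ℕ)
      omega
    · intro h
      exact absurd (Finset.mem_filter.mpr ⟨Finset.mem_univ _, hjstarSM⟩) h
  -- conclude via the reversed (upper triangular) matrix
  set N : Matrix (Fin (n + 1)) (Fin (n + 1)) K := M.submatrix id Fin.revPerm with hN
  have hNtri : N.BlockTriangular id := by
    intro s t hst
    have hst' : (t : ℕ) < (s : ℕ) := hst
    show M s (Fin.rev t) = 0
    apply hzero
    have hs : (s : ℕ) ≤ n := Fin.is_le _
    rw [Fin.val_rev]
    omega
  have h1 : N.det = ∏ i, N i i := Matrix.det_of_upperTriangular hNtri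
  have h3 : (∏ i, N i i) ≠ 0 := by
    rw [Finset.prod_ne_zero_iff]
    intro i _
    show M i (Fin.revPerm i) ≠ 0
    simpa using hdiag i
  intro h
  have h2 : N.det = Equiv.Perm.sign Fin.revPerm * M.det := Matrix.det_permute' _ _
  rw [h, mul_zero] at h2
  exact h3 (h1 ▸ h2 ▸ rfl)
end

section
/- Let k be an algebraically closed field of characteristic p > 0. For any finite set \{r_1, \dots, r_m\} \subset k of distinct elements, the set of (a,b,c,d) \in k^4 for which the fractional linear images \tau(r_j) = (a + b r_j)/(c + d r_j) are defined (denominators nonzero) and linearly independent over \mathbb{F}_p is a nonempty Zariski-open subset of \mathbb{A}^4_k; in particular it is nonempty. -/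
open Polynomial Finset

/-- The polynomial `∑ j, coef j * ∏_{i ≠ j} (X + r i)` is nonzero when the `r i` are
distinct and some `coef j` is nonzero. -/
lemma aux_partial_fraction_poly_ne_zero {k : Type*} [Field k] {m : ℕ} (r : Fin m → k)
    (hr : Function.Injective r) (coef : Fin m → k) {j0 : Fin m} (hj0 : coef j0 ≠ 0) :
    (∑ j : Fin m, C (coef j) * ∏ i ∈ univ.erase j, (X + C (r i))) ≠ 0 := by
  intro hP
  have heval := congrArg (Polynomial.eval (-(r j0))) hP
  simp only [eval_finset_sum, eval_mul, eval_prod, eval_add, eval_X, eval_C, eval_zero] at heval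
  rw [Finset.sum_eq_single j0] at heval
  · have hprod : (∏ i ∈ univ.erase j0, (-(r j0) + r i)) ≠ 0 := by
      apply Finset.prod_ne_zero_iff.mpr
      intro i hi h0
      have : r i = r j0 := by linear_combination h0
      exact (Finset.mem_erase.mp hi).1 (hr this)
    exact mul_ne_zero hj0 hprod heval
  · intro j _ hj
    apply mul_eq_zero_of_right
    apply Finset.prod_eq_zero (i := j0) (Finset.mem_erase.mpr ⟨Ne.symm hj, Finset.mem_univ _⟩)
    ring
  · intro h; exact absurd (Finset.mem_univ j0) h

/-- Over an algebraically closed field `k` of characteristic `p`, for any distinct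
`r_1, …, r_m ∈ k` there exist `a, b, c, d` such that the fractional linear images
`τ(r_j) = (a + b r_j)/(c + d r_j)` are defined and linearly independent over `𝔽_p`. -/
theorem exists_fractional_linear_making_linIndep
    (k : Type*) [Field k] [IsAlgClosed k] (p : ℕ) [Fact p.Prime] [CharP k p]
    (m : ℕ) (r : Fin m → k) (hr : Function.Injective r) :
    ∃ a b c d : k, (∀ j, c + d * r j ≠ 0) ∧
      ∀ h : Fin m → ZMod p, h ≠ 0 →
        (∑ j : Fin m, ((h j).val : k) * ((a + b * r j) / (c + d * r j))) ≠ 0 := by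
  classical
  have hcast : ∀ z : ZMod p, z ≠ 0 → ((z.val : k) ≠ 0) := by
    intro z hz hk
    have hp : p ∣ z.val := (CharP.cast_eq_zero_iff k p _).mp hk
    have hv : z.val = 0 := Nat.eq_zero_of_dvd_of_lt hp (ZMod.val_lt z)
    exact hz ((ZMod.val_eq_zero z).mp hv)
  -- the polynomial associated to a vector of coefficients
  set P : (Fin m → ZMod p) → k[X] := fun h =>
    ∑ j : Fin m, C (((h j).val : k)) * ∏ i ∈ univ.erase j, (X + C (r i)) with hPdef
  have hPne : ∀ h : Fin m → ZMod p, h ≠ 0 → P h ≠ 0 := by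
    intro h hne
    obtain ⟨j0, hj0⟩ := Function.ne_iff.mp hne
    exact aux_partial_fraction_poly_ne_zero r hr _ (hcast _ hj0)
  -- the big polynomial whose nonvanishing at c gives the conclusion
  set Q : k[X] := (∏ j : Fin m, (X + C (r j))) *
    ∏ h ∈ univ.filter (fun h : Fin m → ZMod p => h ≠ 0), P h with hQdef
  have hQne : Q ≠ 0 := by
    apply mul_ne_zero
    · exact Finset.prod_ne_zero_iff.mpr fun j _ => X_add_C_ne_zero (r j)
    · exact Finset.prod_ne_zero_iff.mpr fun h hh => hPne h (Finset.mem_filter.mp hh).2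
  obtain ⟨c, hc⟩ : ∃ c : k, Polynomial.eval c Q ≠ 0 := by
    have hfin := Polynomial.finite_setOf_isRoot hQne
    obtain ⟨c, hc⟩ := hfin.infinite_compl.nonempty
    exact ⟨c, hc⟩
  rw [hQdef, eval_mul, eval_prod, eval_prod] at hc
  have hden : ∀ j : Fin m, c + r j ≠ 0 := by
    intro j h0
    apply hc
    apply mul_eq_zero_of_left
    apply Finset.prod_eq_zero (Finset.mem_univ j)
    simpa using h0
  have hPev : ∀ h : Fin m → ZMod p, h ≠ 0 → Polynomial.eval c (P h) ≠ 0 := by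
    intro h hne h0
    apply hc
    apply mul_eq_zero_of_right
    exact Finset.prod_eq_zero (Finset.mem_filter.mpr ⟨Finset.mem_univ h, hne⟩) h0
  refine ⟨1, 0, c, 1, by simpa using hden, ?_⟩
  intro h hne hsum
  apply hPev h hne
  have key : (∑ j : Fin m, ((h j).val : k) * ((1 + 0 * r j) / (c + 1 * r j))) *
      ∏ j : Fin m, (c + r j) = Polynomial.eval c (P h) := by
    rw [hPdef, Finset.sum_mul]
    simp only [eval_finset_sum, eval_mul, eval_prod, eval_add, eval_X, eval_C]
    refine Finset.sum_congr rfl fun j _ => ?_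
    rw [← Finset.mul_prod_erase univ (fun i => c + r i) (Finset.mem_univ j)]
    have := hden j
    field_simp
    ring
  rw [hsum, zero_mul] at key
  exact key.symm
end
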